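/- In Robin Hood hashing with lookahead, suppose the extended ordering invariant and the stability invariant hold for table A. If some cell i satisfies A[i].val >_i v and A[i].next <_{i+1} v, and additionally A[i].mark = S (stable) or h(A[i].next) ≠ i+1, then v does not physically occur in A: no cell j has A[j].val = v or A[j].next = v. -/
import Mathlib


/-- The rank of `v` at cell `i`: the cyclic distance `(i - h v) mod m`. -/
def rnk {U : Type*} {m : ℕ} (h : U → Fin m) (v : U) (i : Fin m) : ℕ :=
  ((i : ℕ) + m - (h v : ℕ)) % m

/-- Cyclic distance from `a` to `b`, going forward, modulo `m`. -/
def cdist {m : ℕ} (a b : Fin m) : ℕ :=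
  ((b : ℕ) + m - (a : ℕ)) % m

/-- Robin Hood priority: `a >_i b` iff `rank(a,i) > rank(b,i)`, or equal ranks and `a > b`. -/
def prioGT {U : Type*} [LinearOrder U] {m : ℕ} (h : U → Fin m) (i : Fin m) (a b : U) : Prop :=
  rnk h a i > rnk h b i ∨ (rnk h a i = rnk h b i ∧ a > b)

/-- Priority extended to `Option U`: `none` is strictly below every `some v`. -/
def oGT {U : Type*} [LinearOrder U] {m : ℕ} (h : U → Fin m) (i : Fin m) :
    Option U → Option U → Prop
  | some a, some b => prioGT h i a b
  | some _, none => True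
  | none, _ => False

/-- `x ≥_i y` : strictly higher priority, or equal. -/
def oGE {U : Type*} [LinearOrder U] {m : ℕ} (h : U → Fin m) (i : Fin m)
    (x y : Option U) : Prop :=
  oGT h i x y ∨ x = y

/-- The Robin Hood ordering invariant: if `v` is stored at cell `i`, then every cell `j`
on the cyclic interval from `h v` to `i` (exclusive of `i`) stores a value of priority
at least that of `v` at cell `j`. -/
def OrdInv {U : Type*} [LinearOrder U] {m : ℕ} (h : U → Fin m) (A : Fin m → Option U) : Prop :=
  ∀ i v, A i = some v → ∀ j, cdist (h v) j < cdist (h v) i → oGE h j (A j) (some v)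

/-- Cell marks: stable, insert in progress, delete in progress. -/
inductive Mark
  | S | I | D
deriving DecidableEq

/-- A table cell: (value slot, lookahead slot, mark). -/
abbrev Cell (U : Type*) := Option U × Option U × Mark

/-- The extended ordering invariant for a table with lookahead. -/
def ExtInv {U : Type*} [LinearOrder U] {m : ℕ} [NeZero m] (h : U → Fin m)
    (A : Fin m → Cell U) : Prop :=
  -- (a) ordering invariant for the value slots
  (∀ i v, (A i).1 = some v → ∀ j, cdist (h v) j < cdist (h v) i →
    oGE h j ((A j).1) (some v)) ∧
  -- (b) A[i].next ≥_{i+1} A[i+1].val, or h(A[i].next) = i+1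
  (∀ i : Fin m, oGE h (i + 1) ((A i).2.1) ((A (i + 1)).1) ∨
    (∃ w, (A i).2.1 = some w ∧ h w = i + 1)) ∧
  -- (c) A[i].val ≥_i A[i].next, or (h(A[i].next) = i+1 and A[i].next ≥_{i+1} A[i+1].val)
  (∀ i : Fin m, oGE h i ((A i).1) ((A i).2.1) ∨
    ((∃ w, (A i).2.1 = some w ∧ h w = i + 1) ∧
      oGE h (i + 1) ((A i).2.1) ((A (i + 1)).1)))

/-- The (relevant part of the) stability invariant: a stable cell's lookahead slot
agrees with the value slot of the next cell. -/
def StableInv {U : Type*} {m : ℕ} [NeZero m] (A : Fin m → Cell U) : Prop :=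
  ∀ i : Fin m, (A i).2.2 = Mark.S → (A i).2.1 = (A (i + 1)).1

/-- `v` is physically in the table: some cell's value or lookahead slot equals `v`. -/
def physIn {U : Type*} {m : ℕ} (A : Fin m → Cell U) (v : U) : Prop :=
  ∃ i : Fin m, (A i).1 = some v ∨ (A i).2.1 = some v

/-- `v` is logically in the table. -/
def logIn {U : Type*} [LinearOrder U] {m : ℕ} (h : U → Fin m)
    (A : Fin m → Cell U) (v : U) : Prop :=
  ∃ i : Fin m, (A i).1 = some v ∨
    ((A i).2.1 = some v ∧ oGE h i ((A i).1) (some v))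


section Aux

lemma mod_two_m {m x : ℕ} (hm : 0 < m) (hx : x < 2 * m) :
    x % m = if x < m then x else x - m := by
  split_ifs with hx'
  · exact Nat.mod_eq_of_lt hx'
  · rw [Nat.mod_eq_sub_mod (le_of_not_gt hx'), Nat.mod_eq_of_lt (by omega)]

lemma cdist_lt {m : ℕ} [NeZero m] (a b : Fin m) : cdist a b < m :=
  Nat.mod_lt _ (NeZero.pos m)

lemma cdist_eq {m : ℕ} [NeZero m] (a b : Fin m) :
    cdist a b = if (a : ℕ) ≤ (b : ℕ) then (b : ℕ) - (a : ℕ) else (b : ℕ) + m - (a : ℕ) := by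
  have hm := NeZero.pos m
  have ha := a.isLt; have hb := b.isLt
  unfold cdist
  rw [mod_two_m hm (by omega)]
  split_ifs <;> omega

lemma cdist_inj {m : ℕ} [NeZero m] (a b c : Fin m) (h : cdist a b = cdist a c) : b = c := by
  have ha := a.isLt; have hb := b.isLt; have hc := c.isLt
  rw [cdist_eq, cdist_eq] at h
  apply Fin.ext
  split_ifs at h <;> omega

lemma cdist_self {m : ℕ} [NeZero m] (a : Fin m) : cdist a a = 0 := by
  rw [cdist_eq]; simp

lemma cdist_succ' {m : ℕ} [NeZero m] (a i : Fin m) :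
    (cdist a i = m - 1 ∧ cdist a (i + 1) = 0) ∨ cdist a (i + 1) = cdist a i + 1 := by
  have hm := NeZero.pos m
  have ha := a.isLt; have hi := i.isLt
  have hv : ((i + 1 : Fin m) : ℕ) = ((i : ℕ) + 1) % m := by
    rw [Fin.add_def, Fin.val_one']
    conv_rhs => rw [Nat.add_mod, Nat.mod_eq_of_lt hi]
  rw [cdist_eq, cdist_eq, hv, mod_two_m hm (by omega)]
  split_ifs <;> omega

lemma cdist_succ_self {m : ℕ} [NeZero m] (j : Fin m) : cdist (j + 1) j = m - 1 := by
  have h0 : cdist (j + 1) (j + 1) = 0 := cdist_self _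
  have h1 := cdist_succ' (j + 1) j
  have h2 := cdist_lt (j + 1) j
  omega

lemma cdist_sub {m : ℕ} [NeZero m] (a b i k : Fin m)
    (h1 : cdist b i ≤ cdist a i) (h2 : cdist b k ≤ cdist b i) :
    cdist a k = cdist a i - cdist b i + cdist b k := by
  have ha := a.isLt; have hb := b.isLt; have hi := i.isLt; have hk := k.isLt
  rw [cdist_eq, cdist_eq] at h1
  rw [cdist_eq, cdist_eq] at h2
  rw [cdist_eq, cdist_eq, cdist_eq, cdist_eq]
  split_ifs at h1 h2 ⊢ <;> omega

lemma prioGT_irrefl {U : Type*} [LinearOrder U] {m : ℕ} (h : U → Fin m) (i : Fin m)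
    (a : U) (hp : prioGT h i a a) : False := by
  unfold prioGT at hp
  rcases hp with hp | ⟨_, hp⟩ <;> exact lt_irrefl _ hp

lemma prioGT_asymm {U : Type*} [LinearOrder U] {m : ℕ} (h : U → Fin m) (i : Fin m)
    (a b : U) (h1 : prioGT h i a b) (h2 : prioGT h i b a) : False := by
  unfold prioGT at h1 h2
  rcases h1 with h1 | ⟨e1, h1⟩ <;> rcases h2 with h2 | ⟨e2, h2⟩
  · omega
  · omega
  · omega
  · exact lt_asymm h1 h2

lemma prioGT_trans {U : Type*} [LinearOrder U] {m : ℕ} (h : U → Fin m) (i : Fin m)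
    (a b c : U) (h1 : prioGT h i a b) (h2 : prioGT h i b c) : prioGT h i a c := by
  unfold prioGT at h1 h2 ⊢
  rcases h1 with h1 | ⟨e1, h1⟩ <;> rcases h2 with h2 | ⟨e2, h2⟩
  · exact Or.inl (lt_trans h2 h1)
  · exact Or.inl (by omega)
  · exact Or.inl (by omega)
  · exact Or.inr ⟨by omega, lt_trans h2 h1⟩

lemma oGT_oGE_trans {U : Type*} [LinearOrder U] {m : ℕ} (h : U → Fin m) (i : Fin m)
    (v : U) (x y : Option U) (h1 : oGT h i (some v) x) (h2 : oGE h i x y) :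
    oGT h i (some v) y := by
  rcases h2 with h2 | rfl
  · cases x with
    | none => exact absurd h2 (by cases y <;> simp [oGT])
    | some a =>
      cases y with
      | none => exact trivial
      | some b =>
        have h1' : prioGT h i v a := h1
        have h2' : prioGT h i a b := h2
        exact prioGT_trans h i v a b h1' h2'
  · exact h1

lemma oGT_oGE_False {U : Type*} [LinearOrder U] {m : ℕ} (h : U → Fin m) (i : Fin m)
    (v : U) (x : Option U) (h1 : oGT h i (some v) x) (h2 : oGE h i x (some v)) : False :=
  prioGT_irrefl h i v (oGT_oGE_trans h i v x (some v) h1 h2)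

lemma rnk_eq_cdist {U : Type*} {m : ℕ} (h : U → Fin m) (v : U) (i : Fin m) :
    rnk h v i = cdist (h v) i := rfl

lemma keyL {U : Type*} [LinearOrder U] {m : ℕ} [NeZero m] (h : U → Fin m)
    (A : Fin m → Cell U)
    (ha : ∀ i v, (A i).1 = some v → ∀ j, cdist (h v) j < cdist (h v) i →
      oGE h j ((A j).1) (some v))
    (v : U) (i k : Fin m)
    (h1 : oGT h i ((A i).1) (some v))
    (hk : (A k).1 = some v ∨ oGT h k (some v) ((A k).1))
    (hle : cdist (h v) k ≤ cdist (h v) i) : False := by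
  obtain ⟨u, hu⟩ : ∃ u, (A i).1 = some u := by
    cases hAi : (A i).1 with
    | none => rw [hAi] at h1; exact absurd h1 (by simp [oGT])
    | some u => exact ⟨u, rfl⟩
  rw [hu] at h1
  have h1' : prioGT h i u v := h1
  by_cases hki : k = i
  · subst hki
    rcases hk with hk | hk
    · rw [hk] at hu
      injection hu with huv
      rw [huv] at h1'
      exact prioGT_irrefl _ _ _ h1'
    · rw [hu] at hk
      have hk' : prioGT h k v u := hk
      exact prioGT_asymm h k u v h1' hk'
  · have hne : cdist (h v) k ≠ cdist (h v) i := fun he => hki (cdist_inj _ _ _ he)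
    have htlt : cdist (h v) k < cdist (h v) i := lt_of_le_of_ne hle hne
    have hd : cdist (h v) i ≤ cdist (h u) i := by
      have hr1 := rnk_eq_cdist h u i
      have hr2 := rnk_eq_cdist h v i
      unfold prioGT at h1'
      omega
    have hsub := cdist_sub (h u) (h v) i k hd (le_of_lt htlt)
    have hlt2 : cdist (h u) k < cdist (h u) i := by omega
    have hge := ha i u hu k hlt2
    have hvu : oGE h k (some v) (some u) := by
      rcases hk with hk | hk
      · rw [hk] at hge; exact hge
      · exact Or.inl (oGT_oGE_trans h k v _ _ hk hge)
    rcases hvu with hvu | hvu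
    · have hvu' : prioGT h k v u := hvu
      have hrv := rnk_eq_cdist h v k
      have hru := rnk_eq_cdist h u k
      unfold prioGT at hvu'
      rcases hvu' with hgt | ⟨heq, hgtU⟩
      · omega
      · have hde : cdist (h u) i = cdist (h v) i := by omega
        have hr1 := rnk_eq_cdist h u i
        have hr2 := rnk_eq_cdist h v i
        unfold prioGT at h1'
        rcases h1' with hgt' | ⟨_, hgtU'⟩
        · omega
        · exact lt_asymm hgtU hgtU'
    · injection hvu with hvu
      rw [← hvu] at h1'
      exact prioGT_irrefl h i v h1'

end Aux

theorem stmt13 {U : Type*} [LinearOrder U] {m : ℕ} [NeZero m] (h : U → Fin m)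
    (A : Fin m → Cell U) (hext : ExtInv h A) (hstab : StableInv A)
    (v : U) (i : Fin m)
    (h1 : oGT h i ((A i).1) (some v))
    (h2 : oGT h (i + 1) (some v) ((A i).2.1))
    (h3 : (A i).2.2 = Mark.S ∨ ∀ w, (A i).2.1 = some w → h w ≠ i + 1) :
    ¬ physIn A v := by
  obtain ⟨ha, hb, hc⟩ := hext
  have F2 : oGT h (i + 1) (some v) ((A (i + 1)).1) := by
    rcases h3 with h3 | h3
    · rw [← hstab i h3]; exact h2
    · rcases hb i with hbi | ⟨w, hw, hwh⟩
      · exact oGT_oGE_trans h (i + 1) v _ _ h2 hbi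
      · exact absurd hwh (h3 w hw)
  have noval : ∀ j : Fin m, (A j).1 = some v → False := by
    intro j hj
    rcases lt_trichotomy (cdist (h v) j) (cdist (h v) (i + 1)) with hlt | heq | hgt
    · have hle : cdist (h v) j ≤ cdist (h v) i := by
        have hs := cdist_succ' (h v) i
        have hl := cdist_lt (h v) j
        omega
      exact keyL h A ha v i j h1 (Or.inl hj) hle
    · have hji : j = i + 1 := cdist_inj _ _ _ heq
      rw [hji] at hj
      rw [hj] at F2
      exact prioGT_irrefl h (i + 1) v F2
    · exact oGT_oGE_False h (i + 1) v _ F2 (ha j v hj (i + 1) hgt)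
  rintro ⟨j, hj | hj⟩
  · exact noval j hj
  · by_cases hji : j = i
    · subst hji
      rw [hj] at h2
      exact prioGT_irrefl h (j + 1) v h2
    · rcases hc j with hcj | ⟨⟨w, hw, hwh⟩, hge⟩
      · rw [hj] at hcj
        rcases hcj with hcj | hcj
        swap
        · exact noval j hcj
        · rcases hb j with hbj | ⟨w, hw, hwh⟩
          · rw [hj] at hbj
            rcases hbj with hbj | hbj
            swap
            · exact noval (j + 1) hbj.symm
            · by_cases hcmp : cdist (h v) (j + 1) ≤ cdist (h v) i
              · exact keyL h A ha v i (j + 1) h1 (Or.inr hbj) hcmp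
              · have hle : cdist (h v) (i + 1) ≤ cdist (h v) j := by
                  have hsj := cdist_succ' (h v) j
                  have hsi := cdist_succ' (h v) i
                  have hl1 := cdist_lt (h v) j
                  have hl2 := cdist_lt (h v) i
                  have hl3 := cdist_lt (h v) (i + 1)
                  have hne : cdist (h v) j ≠ cdist (h v) i :=
                    fun he => hji (cdist_inj _ _ _ he)
                  omega
                exact keyL h A ha v j (i + 1) hcj (Or.inr F2) hle
          · rw [hj] at hw
            injection hw with hw
            rw [← hw] at hwh
            have hm1 : cdist (h v) j = m - 1 := by rw [hwh]; exact cdist_succ_self j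
            have hle : cdist (h v) (i + 1) ≤ cdist (h v) j := by
              have := cdist_lt (h v) (i + 1); omega
            exact keyL h A ha v j (i + 1) hcj (Or.inr F2) hle
      · rw [hj] at hw
        injection hw with hw
        rw [← hw] at hwh
        rw [hj] at hge
        rcases hge with hge | hge
        swap
        · exact noval (j + 1) hge.symm
        · have hle : cdist (h v) (j + 1) ≤ cdist (h v) i := by
            have h0 : cdist (h v) (j + 1) = 0 := by rw [hwh]; exact cdist_self _
            omega
          exact keyL h A ha v i (j + 1) h1 (Or.inr hge) hle
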